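/- For every m ≥ 2 and every feasible set E of an m-machine JIT flow-shop instance, there exists a JIT schedule of E in which the processing order of the jobs of E on machine M_1 coincides with their processing order on machine M_2 (i.e., σ_1 = σ_2). In particular, every optimal JIT set admits such a schedule. -/
import Mathlib


open Finset

/-- A just-in-time flow-shop instance on `m` machines with jobs of type `J`:
`p i j` is the (positive integer) processing time of job `j` on machine `i`,
`d j` its positive integer due date and `w j` its positive integer weight. -/
structure JITInstance (m : ℕ) (J : Type) where
  p : Fin m → J → ℕ
  d : J → ℕ
  w : J → ℕ
  p_pos : ∀ i j, 0 < p i j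
  d_pos : ∀ j, 0 < d j
  w_pos : ∀ j, 0 < w j

/-- `S` is a JIT schedule of the job set `E`: on every machine the processing
intervals `(S i j, S i j + p i j]` of distinct jobs of `E` are pairwise disjoint,
each job's operation on machine `i+1` starts no earlier than its completion on
machine `i`, and every job of `E` completes on the last machine exactly at its
due date.  (Start times are nonnegative automatically, being naturals.) -/
def IsJITSchedule {m : ℕ} {J : Type} (I : JITInstance m J)
    (E : Finset J) (S : Fin m → J → ℕ) : Prop :=
  (∀ i : Fin m, ∀ j ∈ E, ∀ j' ∈ E, j ≠ j' →
      S i j + I.p i j ≤ S i j' ∨ S i j' + I.p i j' ≤ S i j) ∧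
  (∀ j ∈ E, ∀ i i' : Fin m, i'.val = i.val + 1 →
      S i j + I.p i j ≤ S i' j) ∧
  (∀ j ∈ E, ∀ i : Fin m, i.val = m - 1 →
      S i j + I.p i j = I.d j)

/-- A job set is feasible if it admits a JIT schedule. -/
def Feasible {m : ℕ} {J : Type} (I : JITInstance m J) (E : Finset J) : Prop :=
  ∃ S : Fin m → J → ℕ, IsJITSchedule I E S

/-- Pairwise disjoint intervals `(S k, S k + p k]` with positive lengths, all
contained in `[0, T]`, have total length at most `T`. -/
lemma jit_packing {J : Type} (F : Finset J) (S p : J → ℕ)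
    (hp : ∀ k ∈ F, 0 < p k)
    (hd : ∀ j ∈ F, ∀ j' ∈ F, j ≠ j' → S j + p j ≤ S j' ∨ S j' + p j' ≤ S j)
    (T : ℕ) (hT : ∀ k ∈ F, S k + p k ≤ T) : ∑ k ∈ F, p k ≤ T := by
  classical
  induction F using Finset.strongInduction generalizing T with
  | _ F ih =>
    rcases F.eq_empty_or_nonempty with rfl | hne
    · simp
    obtain ⟨k, hk, hkmax⟩ := F.exists_max_image (fun j => S j + p j) hne
    have hF' : ∀ j ∈ F.erase k, S j + p j ≤ S k := by
      intro j hj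
      have hjF := Finset.mem_of_mem_erase hj
      have hne' := Finset.ne_of_mem_erase hj
      rcases hd j hjF k hk hne' with h | h
      · exact h
      · have := hkmax j hjF
        have := hp j hjF
        omega
    have hsub : F.erase k ⊂ F := Finset.erase_ssubset hk
    have hrec : ∑ j ∈ F.erase k, p j ≤ S k :=
      ih _ hsub (fun j hj => hp j (Finset.mem_of_mem_erase hj))
        (fun j hj j' hj' h => hd j (Finset.mem_of_mem_erase hj)
          j' (Finset.mem_of_mem_erase hj') h) (S k) hF'
    have hsum : ∑ j ∈ F, p j = p k + ∑ j ∈ F.erase k, p j :=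
      (Finset.add_sum_erase F p hk).symm
    have := hT k hk
    omega

/-- for `m ≥ 2`, every feasible set admits a JIT schedule in which
the processing order on machine `M₁` coincides with the processing order on
machine `M₂`. -/
theorem jit_exists_schedule_same_order_first_two_machines {m : ℕ} (hm : 2 ≤ m)
    {J : Type} (I : JITInstance m J) (E : Finset J) (hE : Feasible I E) :
    ∃ S : Fin m → J → ℕ, IsJITSchedule I E S ∧
      ∀ j ∈ E, ∀ j' ∈ E,
        (S ⟨0, by omega⟩ j < S ⟨0, by omega⟩ j' ↔
          S ⟨1, by omega⟩ j < S ⟨1, by omega⟩ j') := by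
  classical
  obtain ⟨S, hdisj, hprec, hdue⟩ := hE
  set i0 : Fin m := ⟨0, by omega⟩ with hi0
  set i1 : Fin m := ⟨1, by omega⟩ with hi1
  -- machine-1 start times are pairwise distinct on E
  have hS1ne : ∀ j ∈ E, ∀ j' ∈ E, j ≠ j' → S i1 j ≠ S i1 j' := by
    intro j hj j' hj' hne
    rcases hdisj i1 j hj j' hj' hne with h | h
    · have := I.p_pos i1 j; omega
    · have := I.p_pos i1 j'; omega
  -- the new machine-0 schedule: jobs back-to-back in order of machine-1 starts
  set S' : Fin m → J → ℕ := fun i j =>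
    if i = i0 then ∑ k ∈ E.filter (fun k => S i1 k < S i1 j), I.p i0 k
    else S i j with hS'
  have hS'0 : ∀ j, S' i0 j = ∑ k ∈ E.filter (fun k => S i1 k < S i1 j), I.p i0 k := by
    intro j; simp [hS']
  have hS'other : ∀ i : Fin m, i ≠ i0 → ∀ j, S' i j = S i j := by
    intro i hi j; simp [hS', hi]
  have hi1ne : i1 ≠ i0 := by
    intro h; rw [Fin.ext_iff] at h; simp [hi0, hi1] at h
  -- completion on new machine 0 is before the machine-1 start
  have hC : ∀ j ∈ E, S' i0 j + I.p i0 j ≤ S i1 j := by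
    intro j hj
    have hins : E.filter (fun k => S i1 k ≤ S i1 j)
        = insert j (E.filter (fun k => S i1 k < S i1 j)) := by
      ext k
      simp only [Finset.mem_filter, Finset.mem_insert]
      constructor
      · rintro ⟨hkE, hle⟩
        by_cases hkj : k = j
        · exact Or.inl hkj
        · exact Or.inr ⟨hkE, lt_of_le_of_ne hle (hS1ne k hkE j hj hkj)⟩
      · rintro (rfl | ⟨hkE, hlt⟩)
        · exact ⟨hj, le_rfl⟩
        · exact ⟨hkE, le_of_lt hlt⟩
    have hjnot : j ∉ E.filter (fun k => S i1 k < S i1 j) := by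
      simp [Finset.mem_filter]
    have hsum : ∑ k ∈ E.filter (fun k => S i1 k ≤ S i1 j), I.p i0 k
        = I.p i0 j + ∑ k ∈ E.filter (fun k => S i1 k < S i1 j), I.p i0 k := by
      rw [hins, Finset.sum_insert hjnot]
    have hpack : ∑ k ∈ E.filter (fun k => S i1 k ≤ S i1 j), I.p i0 k ≤ S i1 j := by
      apply jit_packing _ (S i0) (I.p i0)
      · intro k _; exact I.p_pos i0 k
      · intro a ha b hb hab
        exact hdisj i0 a (Finset.mem_of_mem_filter a ha)
          b (Finset.mem_of_mem_filter b hb) hab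
      · intro k hk
        rw [Finset.mem_filter] at hk
        have h1 : S i0 k + I.p i0 k ≤ S i1 k := hprec k hk.1 i0 i1 (by simp [hi0, hi1])
        omega
    rw [hS'0]
    omega
  -- monotonicity of the new machine-0 schedule in the machine-1 order
  have hmono : ∀ j ∈ E, ∀ j' ∈ E, S i1 j < S i1 j' →
      S' i0 j + I.p i0 j ≤ S' i0 j' := by
    intro j hj j' hj' hlt
    rw [hS'0, hS'0]
    have hins : E.filter (fun k => S i1 k ≤ S i1 j)
        = insert j (E.filter (fun k => S i1 k < S i1 j)) := by
      ext k
      simp only [Finset.mem_filter, Finset.mem_insert]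
      constructor
      · rintro ⟨hkE, hle⟩
        by_cases hkj : k = j
        · exact Or.inl hkj
        · exact Or.inr ⟨hkE, lt_of_le_of_ne hle (hS1ne k hkE j hj hkj)⟩
      · rintro (rfl | ⟨hkE, hlt'⟩)
        · exact ⟨hj, le_rfl⟩
        · exact ⟨hkE, le_of_lt hlt'⟩
    have hjnot : j ∉ E.filter (fun k => S i1 k < S i1 j) := by
      simp [Finset.mem_filter]
    have h1 : (∑ k ∈ E.filter (fun k => S i1 k < S i1 j), I.p i0 k) + I.p i0 j
        = ∑ k ∈ E.filter (fun k => S i1 k ≤ S i1 j), I.p i0 k := by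
      rw [hins, Finset.sum_insert hjnot]; ring
    rw [h1]
    apply Finset.sum_le_sum_of_subset
    intro k hk
    rw [Finset.mem_filter] at hk ⊢
    exact ⟨hk.1, lt_of_le_of_lt hk.2 hlt⟩
  refine ⟨S', ⟨?_, ?_, ?_⟩, ?_⟩
  · -- disjointness
    intro i j hj j' hj' hne
    by_cases hi : i = i0
    · subst hi
      rcases lt_trichotomy (S i1 j) (S i1 j') with h | h | h
      · exact Or.inl (hmono j hj j' hj' h)
      · exact absurd h (hS1ne j hj j' hj' hne)
      · exact Or.inr (hmono j' hj' j hj h)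
    · rw [hS'other i hi, hS'other i hi]
      exact hdisj i j hj j' hj' hne
  · -- precedence
    intro j hj i i' hii'
    have hi' : i' ≠ i0 := by
      intro h; rw [h] at hii'; simp [hi0] at hii'
    by_cases hi : i = i0
    · subst hi
      have : i' = i1 := by
        apply Fin.ext; simp [hi0] at hii'; simp [hi1, hii']
      rw [this, hS'other i1 hi1ne]
      exact hC j hj
    · rw [hS'other i hi, hS'other i' hi']
      exact hprec j hj i i' hii'
  · -- due dates
    intro j hj i hi
    have hine : i ≠ i0 := by
      intro h; rw [h] at hi; simp [hi0] at hi; omega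
    rw [hS'other i hine]
    exact hdue j hj i hi
  · -- same order on machines 0 and 1
    intro j hj j' hj'
    show S' i0 j < S' i0 j' ↔ S' i1 j < S' i1 j'
    rw [hS'other i1 hi1ne, hS'other i1 hi1ne]
    by_cases hne : j = j'
    · subst hne; simp
    constructor
    · intro h
      rcases lt_trichotomy (S i1 j) (S i1 j') with h1 | h1 | h1
      · exact h1
      · exact absurd h1 (hS1ne j hj j' hj' hne)
      · have := hmono j' hj' j hj h1
        have := I.p_pos i0 j'
        omega
    · intro h
      have := hmono j hj j' hj' h
      have := I.p_pos i0 j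
      omega
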